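/- Suppose the smooth functions X₁,…,X_n : ℝ → ℝ satisfy the homogeneity condition X_i(λx) = λX_i(x) for all λ > 0, x ∈ ℝ, i = 1,…,n. Then for every Pontryagin extremal (x₁,x₂,u,ψ₀,ψ₁,ψ₂) of the problem min ∫_0^T (u₁²+⋯+u_n²) dt subject to ẋ₁ = x₂, ẋ₂ = Σᵢ Xᵢ(x₁)uᵢ, the quantity ψ₁(t)x₁(t) + ψ₂(t)x₂(t) is constant for t ∈ [0,T]. -/

import Mathlib

open Set MeasureTheory

/-- `f` is absolutely continuous on `[a,b]`. -/
def AbsContOn (a b : ℝ) (f : ℝ → ℝ) : Prop :=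
  ∀ ε > 0, ∃ δ > 0, ∀ (n : ℕ) (c d : Fin n → ℝ),
    (∀ j, a ≤ c j ∧ c j ≤ d j ∧ d j ≤ b) →
    (Pairwise fun i j => Disjoint (Set.Ioo (c i) (d i)) (Set.Ioo (c j) (d j))) →
    (∑ j, (d j - c j)) ≤ δ → (∑ j, |f (d j) - f (c j)|) ≤ ε

/-- Hamiltonian of the problem `∫ Σ uᵢ² dt → min`, `ẋ₁ = x₂`, `ẋ₂ = Σ Xᵢ(x₁)uᵢ`. -/
noncomputable def H15 (n : ℕ) (X : Fin n → ℝ → ℝ) (x1 x2 : ℝ) (u : Fin n → ℝ)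
    (p0 p1 p2 : ℝ) : ℝ :=
  p0 * (∑ i, u i ^ 2) + p1 * x2 + p2 * (∑ i, X i x1 * u i)

/-- Pontryagin extremal of the above problem on `[0,T]`: the Hamiltonian system
(with the partial derivatives computed explicitly) and the maximality condition
over `Ω = ℝⁿ` hold a.e. -/
def IsExtremal15 (n : ℕ) (T : ℝ) (X : Fin n → ℝ → ℝ)
    (x1 x2 : ℝ → ℝ) (u : ℝ → Fin n → ℝ) (p0 : ℝ) (p1 p2 : ℝ → ℝ) : Prop :=
  AbsContOn 0 T x1 ∧ AbsContOn 0 T x2 ∧ AbsContOn 0 T p1 ∧ AbsContOn 0 T p2 ∧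
  Measurable u ∧ (∃ M, ∀ t, ‖u t‖ ≤ M) ∧ p0 ≤ 0 ∧
  ¬(p0 = 0 ∧ ∀ t ∈ Set.Icc (0 : ℝ) T, p1 t = 0 ∧ p2 t = 0) ∧
  (∀ᵐ t : ℝ, t ∈ Set.Icc (0 : ℝ) T →
    HasDerivAt x1 (x2 t) t ∧
    HasDerivAt x2 (∑ i, X i (x1 t) * u t i) t ∧
    HasDerivAt p1 (-(p2 t * ∑ i, deriv (X i) (x1 t) * u t i)) t ∧
    HasDerivAt p2 (-(p1 t)) t ∧
    ∀ v : Fin n → ℝ, H15 n X (x1 t) (x2 t) v p0 (p1 t) (p2 t)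
      ≤ H15 n X (x1 t) (x2 t) (u t) p0 (p1 t) (p2 t))

lemma AbsContOn.continuousOn {a b : ℝ} {f : ℝ → ℝ} (hf : AbsContOn a b f) :
    ContinuousOn f (Set.Icc a b) := by
  intro x hx
  rw [Metric.continuousWithinAt_iff]
  intro ε hε
  obtain ⟨δ, hδ, H⟩ := hf (ε/2) (half_pos hε)
  refine ⟨δ, hδ, fun {y} hy hdist => ?_⟩
  have h1 := H 1 (fun _ => min x y) (fun _ => max x y)
    (fun j => ⟨le_min hx.1 hy.1, min_le_max, max_le hx.2 hy.2⟩)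
    Subsingleton.pairwise ?_
  · rw [Fin.sum_univ_one] at h1
    have h2 : dist (f y) (f x) = |f (max x y) - f (min x y)| := by
      rcases le_total x y with h | h
      · rw [min_eq_left h, max_eq_right h, Real.dist_eq, abs_sub_comm]
      · rw [min_eq_right h, max_eq_left h, Real.dist_eq, abs_sub_comm]
    rw [h2]; linarith
  · rw [Fin.sum_univ_one]
    have h3 : max x y - min x y = |y - x| := by
      rcases le_total x y with h | h
      · rw [min_eq_left h, max_eq_right h, abs_of_nonneg (by linarith)]
      · rw [min_eq_right h, max_eq_left h, abs_of_nonpos (by linarith)]; ring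
    rw [h3]
    exact le_of_lt (by rwa [Real.dist_eq] at hdist)

lemma AbsContOn.add {a b : ℝ} {f g : ℝ → ℝ} (hf : AbsContOn a b f) (hg : AbsContOn a b g) :
    AbsContOn a b (fun t => f t + g t) := by
  intro ε hε
  obtain ⟨δ1, hδ1, H1⟩ := hf (ε/2) (half_pos hε)
  obtain ⟨δ2, hδ2, H2⟩ := hg (ε/2) (half_pos hε)
  refine ⟨min δ1 δ2, lt_min hδ1 hδ2, fun n c d h1 h2 h3 => ?_⟩
  have A := H1 n c d h1 h2 (h3.trans (min_le_left _ _))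
  have B := H2 n c d h1 h2 (h3.trans (min_le_right _ _))
  calc (∑ j, |f (d j) + g (d j) - (f (c j) + g (c j))|)
      ≤ ∑ j, (|f (d j) - f (c j)| + |g (d j) - g (c j)|) := by
        apply Finset.sum_le_sum; intro j _
        have h4 : f (d j) + g (d j) - (f (c j) + g (c j))
            = (f (d j) - f (c j)) + (g (d j) - g (c j)) := by ring
        rw [h4]; exact abs_add_le _ _
    _ = (∑ j, |f (d j) - f (c j)|) + ∑ j, |g (d j) - g (c j)| := Finset.sum_add_distrib
    _ ≤ ε/2 + ε/2 := add_le_add A B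
    _ = ε := by ring

lemma AbsContOn.mul {a b : ℝ} {f g : ℝ → ℝ} (hf : AbsContOn a b f) (hg : AbsContOn a b g) :
    AbsContOn a b (fun t => f t * g t) := by
  obtain ⟨Cf, hCf⟩ := isCompact_Icc.exists_bound_of_continuousOn hf.continuousOn
  obtain ⟨Cg, hCg⟩ := isCompact_Icc.exists_bound_of_continuousOn hg.continuousOn
  set K := |Cf| + |Cg| + 1 with hK
  have hK0 : 0 < K := by positivity
  have hbf : ∀ x ∈ Set.Icc a b, |f x| ≤ K := fun x hx => by
    have h := hCf x hx; rw [Real.norm_eq_abs] at h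
    have := h.trans (le_abs_self _); linarith [abs_nonneg Cg]
  have hbg : ∀ x ∈ Set.Icc a b, |g x| ≤ K := fun x hx => by
    have h := hCg x hx; rw [Real.norm_eq_abs] at h
    have := h.trans (le_abs_self _); linarith [abs_nonneg Cf]
  intro ε hε
  obtain ⟨δ1, hδ1, H1⟩ := hf (ε/(2*K)) (by positivity)
  obtain ⟨δ2, hδ2, H2⟩ := hg (ε/(2*K)) (by positivity)
  refine ⟨min δ1 δ2, lt_min hδ1 hδ2, fun n c d h1 h2 h3 => ?_⟩
  have A := H1 n c d h1 h2 (h3.trans (min_le_left _ _))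
  have B := H2 n c d h1 h2 (h3.trans (min_le_right _ _))
  have key : ∀ j, |f (d j) * g (d j) - f (c j) * g (c j)|
      ≤ K * |g (d j) - g (c j)| + K * |f (d j) - f (c j)| := by
    intro j
    have hcj : c j ∈ Set.Icc a b := ⟨(h1 j).1, (h1 j).2.1.trans (h1 j).2.2⟩
    have hdj : d j ∈ Set.Icc a b := ⟨(h1 j).1.trans (h1 j).2.1, (h1 j).2.2⟩
    have h4 : f (d j) * g (d j) - f (c j) * g (c j)
        = f (d j) * (g (d j) - g (c j)) + g (c j) * (f (d j) - f (c j)) := by ring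
    rw [h4]
    refine (abs_add_le _ _).trans ?_
    rw [abs_mul, abs_mul]
    exact add_le_add (mul_le_mul_of_nonneg_right (hbf _ hdj) (abs_nonneg _))
      (mul_le_mul_of_nonneg_right (hbg _ hcj) (abs_nonneg _))
  calc (∑ j, |f (d j) * g (d j) - f (c j) * g (c j)|)
      ≤ ∑ j, (K * |g (d j) - g (c j)| + K * |f (d j) - f (c j)|) :=
        Finset.sum_le_sum (fun j _ => key j)
    _ = K * (∑ j, |g (d j) - g (c j)|) + K * (∑ j, |f (d j) - f (c j)|) := by
        rw [Finset.sum_add_distrib, Finset.mul_sum, Finset.mul_sum]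
    _ ≤ K * (ε/(2*K)) + K * (ε/(2*K)) := by gcongr
    _ = ε := by field_simp; ring

lemma euler_rel {X : ℝ → ℝ} (hX : ContDiff ℝ (⊤ : ℕ∞) X)
    (hhom : ∀ l > (0:ℝ), ∀ x, X (l * x) = l * X x) (x : ℝ) : deriv X x * x = X x := by
  have hdiff : Differentiable ℝ X := hX.differentiable (by simp)
  have inner : HasDerivAt (fun l : ℝ => l * x) x 1 := by
    simpa using (hasDerivAt_id (1:ℝ)).mul_const x
  have h1 : HasDerivAt (fun l : ℝ => X (l * x)) (deriv X x * x) 1 := by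
    have h := (hdiff (1 * x)).hasDerivAt.comp 1 inner
    simp only [one_mul] at h; exact h
  have h2 : HasDerivAt (fun l : ℝ => l * X x) (deriv X x * x) 1 := by
    refine h1.congr_of_eventuallyEq ?_
    filter_upwards [Ioi_mem_nhds (by norm_num : (0:ℝ) < 1)] with l hl
    exact (hhom l hl x).symm
  have h3 : HasDerivAt (fun l : ℝ => l * X x) (X x) 1 := by
    simpa using (hasDerivAt_id (1:ℝ)).mul_const (X x)
  exact h2.unique h3


lemma AbsContOn.luzinN {T : ℝ} {f : ℝ → ℝ} (hfa : AbsContOn 0 T f) {A : Set ℝ}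
    (hA : A ⊆ Set.Icc 0 T) (h0 : volume A = 0) : volume (f '' A) = 0 := by
  have hc : ContinuousOn f (Set.Icc 0 T) := hfa.continuousOn
  have hf := hfa
  have key : ∀ ε : ℝ, 0 < ε → volume (f '' A) ≤ ENNReal.ofReal ε := by
    intro ε hε
    obtain ⟨δ, hδ, H⟩ := hf ε hε
    set A' := A ∩ Set.Ioo 0 T with hA'def
    have hA'0 : volume A' = 0 := measure_mono_null inter_subset_left h0
    obtain ⟨V, hVA, hVopen, hVvol⟩ := Set.exists_isOpen_lt_of_lt A' (ENNReal.ofReal δ)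
      (by rw [hA'0]; exact ENNReal.ofReal_pos.2 hδ)
    set U := V ∩ Set.Ioo 0 T with hUdef
    have hUopen : IsOpen U := hVopen.inter isOpen_Ioo
    have hUA : A' ⊆ U := subset_inter hVA inter_subset_right
    have hUvol : volume U < ENNReal.ofReal δ :=
      lt_of_le_of_lt (measure_mono inter_subset_left) hVvol
    have hUsub : U ⊆ Set.Ioo 0 T := inter_subset_right
    -- connected components of U
    set 𝒞 : Set (Set ℝ) := {C | ∃ x ∈ U, C = connectedComponentIn U x} with h𝒞
    have hmem : ∀ C ∈ 𝒞, IsOpen C ∧ C.Nonempty ∧ IsPreconnected C ∧ C ⊆ U := by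
      rintro C ⟨x, hx, rfl⟩
      exact ⟨hUopen.connectedComponentIn, (connectedComponentIn_nonempty_iff).2 hx,
        (isConnected_connectedComponentIn_iff.2 hx).isPreconnected,
        connectedComponentIn_subset _ _⟩
    have hdisj : 𝒞.PairwiseDisjoint id := by
      rintro C ⟨x, hx, rfl⟩ D ⟨y, hy, rfl⟩ hne
      refine Set.disjoint_left.2 fun z hzC hzD => hne ?_
      simp only [id] at hzC hzD ⊢
      rw [connectedComponentIn_eq hzC, ← connectedComponentIn_eq hzD]
    have hcount : 𝒞.Countable :=
      hdisj.countable_of_isOpen (fun C hC => (hmem C hC).1) (fun C hC => (hmem C hC).2.1)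
    have hcover : U ⊆ ⋃ C ∈ 𝒞, C := fun x hx =>
      mem_biUnion ⟨x, hx, rfl⟩ (mem_connectedComponentIn hx)
    -- choose endpoints for each component
    have hchoice : ∀ C ∈ 𝒞, ∃ p : ℝ × ℝ, p.1 ≤ p.2 ∧ p.1 ∈ Set.Icc (0:ℝ) T ∧
        p.2 ∈ Set.Icc (0:ℝ) T ∧ Set.Ioo p.1 p.2 ⊆ C ∧
        volume (f '' C) ≤ ENNReal.ofReal |f p.2 - f p.1| := by
      intro C hC
      obtain ⟨hCopen, hCne, hCpre, hCU⟩ := hmem C hC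
      have hCsub : C ⊆ Set.Ioo 0 T := hCU.trans hUsub
      have hbdd : BddBelow C ∧ BddAbove C :=
        ⟨bddBelow_Ioo.mono hCsub, bddAbove_Ioo.mono hCsub⟩
      set a := sInf C with ha
      set b := sSup C with hb
      have hab : a ≤ b := by
        obtain ⟨z, hz⟩ := hCne
        exact (csInf_le hbdd.1 hz).trans (le_csSup hbdd.2 hz)
      have hCIcc : C ⊆ Set.Icc a b := fun z hz => ⟨csInf_le hbdd.1 hz, le_csSup hbdd.2 hz⟩
      have ha0 : (0:ℝ) ≤ a := le_csInf hCne fun z hz => (hCsub hz).1.le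
      have hbT : b ≤ T := csSup_le hCne fun z hz => (hCsub hz).2.le
      have hIooC : Set.Ioo a b ⊆ C := by
        intro z hz
        obtain ⟨x, hxC, hxz⟩ := exists_lt_of_csInf_lt hCne hz.1
        obtain ⟨y, hyC, hzy⟩ := exists_lt_of_lt_csSup hCne hz.2
        exact hCpre.ordConnected.out hxC hyC ⟨hxz.le, hzy.le⟩
      have habIcc : Set.Icc a b ⊆ Set.Icc (0:ℝ) T := Set.Icc_subset_Icc ha0 hbT
      have hcont : ContinuousOn f (Set.Icc a b) := hc.mono habIcc
      obtain ⟨α, hα, hαmin⟩ := isCompact_Icc.exists_isMinOn (Set.nonempty_Icc.2 hab) hcont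
      obtain ⟨β, hβ, hβmax⟩ := isCompact_Icc.exists_isMaxOn (Set.nonempty_Icc.2 hab) hcont
      have hfab : f α ≤ f β := hαmin hβ
      set c := min α β with hcdef
      set d := max α β with hddef
      have hcab : c ∈ Set.Icc a b := ⟨le_min hα.1 hβ.1, min_le_of_left_le hα.2⟩
      have hdab : d ∈ Set.Icc a b := ⟨le_max_of_le_left hα.1, max_le hα.2 hβ.2⟩
      have habs : |f d - f c| = f β - f α := by
        rcases le_total α β with h | h
        · rw [hcdef, hddef, min_eq_left h, max_eq_right h, abs_of_nonneg (by linarith)]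
        · rw [hcdef, hddef, min_eq_right h, max_eq_left h, abs_of_nonpos (by linarith)]; ring
      refine ⟨(c, d), min_le_max, habIcc hcab, habIcc hdab, ?_, ?_⟩
      · exact (Set.Ioo_subset_Ioo hcab.1 hdab.2).trans hIooC
      · have hfC : f '' C ⊆ Set.Icc (f α) (f β) := by
          rintro _ ⟨z, hz, rfl⟩
          exact ⟨hαmin (hCIcc hz), hβmax (hCIcc hz)⟩
        calc volume (f '' C) ≤ volume (Set.Icc (f α) (f β)) := measure_mono hfC
          _ = ENNReal.ofReal (f β - f α) := Real.volume_Icc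
          _ = ENNReal.ofReal |f d - f c| := by rw [habs]
    choose p hple hp1 hp2 hpsub hpvol using hchoice
    have hcountable : Countable ↥𝒞 := hcount.to_subtype
    set q : ↥𝒞 → ℝ × ℝ := fun C => p C.1 C.2 with hqdef
    have himg1 : volume (f '' U) ≤ ∑' (C : ↥𝒞), volume (f '' (C : Set ℝ)) := by
      have hsubU : f '' U ⊆ ⋃ (C : ↥𝒞), f '' (C : Set ℝ) := by
        rintro _ ⟨x, hx, rfl⟩
        exact mem_iUnion.2 ⟨⟨_, ⟨x, hx, rfl⟩⟩, ⟨x, mem_connectedComponentIn hx, rfl⟩⟩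
      exact (measure_mono hsubU).trans (measure_iUnion_le _)
    have hsum : ∑' (C : ↥𝒞), ENNReal.ofReal |f (q C).2 - f (q C).1| ≤ ENNReal.ofReal ε := by
      refine Summable.tsum_le_of_sum_le ENNReal.summable ?_
      intro s
      set e : Fin s.card ≃ ↥s := s.equivFin.symm with hedef
      set cc : Fin s.card → ℝ := fun j => (q (e j).1).1 with hccdef
      set dd : Fin s.card → ℝ := fun j => (q (e j).1).2 with hdddef
      have h1 : ∀ j, (0:ℝ) ≤ cc j ∧ cc j ≤ dd j ∧ dd j ≤ T := fun j =>
        ⟨(hp1 _ _).1, hple _ _, (hp2 _ _).2⟩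
      have h2 : Pairwise fun i j => Disjoint (Set.Ioo (cc i) (dd i)) (Set.Ioo (cc j) (dd j)) := by
        intro i j hij
        have hne : ((e i).1 : Set ℝ) ≠ ((e j).1 : Set ℝ) := by
          intro h
          exact hij (e.injective (Subtype.ext (Subtype.ext h)))
        exact ((hdisj (e i).1.2 (e j).1.2 hne).mono (hpsub _ _) (hpsub _ _))
      have h3 : (∑ j, (dd j - cc j)) ≤ δ := by
        have hIooU : ∀ j, Set.Ioo (cc j) (dd j) ⊆ U := fun j =>
          (hpsub _ _).trans (hmem _ (e j).1.2).2.2.2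
        have hm : ENNReal.ofReal (∑ j, (dd j - cc j)) ≤ ENNReal.ofReal δ := by
          rw [ENNReal.ofReal_sum_of_nonneg (fun j _ => sub_nonneg.2 (hple _ _))]
          have hvol : ∀ j, ENNReal.ofReal (dd j - cc j) = volume (Set.Ioo (cc j) (dd j)) :=
            fun j => Real.volume_Ioo.symm
          calc (∑ j, ENNReal.ofReal (dd j - cc j))
              = ∑ j, volume (Set.Ioo (cc j) (dd j)) := Finset.sum_congr rfl (fun j _ => hvol j)
            _ = volume (⋃ j, Set.Ioo (cc j) (dd j)) := by
                rw [measure_iUnion h2 (fun j => measurableSet_Ioo), tsum_fintype]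
            _ ≤ volume U := measure_mono (Set.iUnion_subset hIooU)
            _ ≤ ENNReal.ofReal δ := hUvol.le
        exact (ENNReal.ofReal_le_ofReal_iff hδ.le).1 hm
      have h4 := H s.card cc dd h1 h2 h3
      have h5 : ∑ C ∈ s, ENNReal.ofReal |f (q C).2 - f (q C).1|
          = ∑ j, ENNReal.ofReal |f (dd j) - f (cc j)| := by
        rw [← Finset.sum_coe_sort s,
          ← Equiv.sum_comp e (fun C : ↥s => ENNReal.ofReal |f (q C.1).2 - f (q C.1).1|)]
      rw [h5, ← ENNReal.ofReal_sum_of_nonneg (fun j _ => abs_nonneg _)]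
      exact ENNReal.ofReal_le_ofReal h4
    have himg2 : ∀ C : ↥𝒞, volume (f '' (C : Set ℝ)) ≤ ENNReal.ofReal |f (q C).2 - f (q C).1| :=
      fun C => hpvol C.1 C.2
    have hU_im : volume (f '' U) ≤ ENNReal.ofReal ε :=
      himg1.trans ((ENNReal.tsum_le_tsum himg2).trans hsum)
    have hsplit : f '' A ⊆ f '' U ∪ {f 0, f T} := by
      rintro _ ⟨x, hx, rfl⟩
      rcases eq_or_lt_of_le (hA hx).1 with h0x | h0x
      · exact Or.inr (by simp [← h0x])
      · rcases eq_or_lt_of_le (hA hx).2 with hxT | hxT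
        · exact Or.inr (by simp [hxT])
        · exact Or.inl ⟨x, hUA ⟨hx, h0x, hxT⟩, rfl⟩
    calc volume (f '' A) ≤ volume (f '' U) + volume ({f 0, f T} : Set ℝ) :=
        (measure_mono hsplit).trans (measure_union_le _ _)
      _ ≤ ENNReal.ofReal ε + 0 := add_le_add hU_im
          (le_of_eq (((Set.finite_singleton _).insert _).measure_zero _))
      _ = ENNReal.ofReal ε := add_zero _
  refine le_antisymm ?_ zero_le
  refine ENNReal.le_of_forall_pos_le_add fun ε' hε' _ => ?_
  rw [zero_add, ← ENNReal.ofReal_coe_nnreal]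
  exact key ε' (by exact_mod_cast hε')

lemma AbsContOn.constant_of_ae_deriv_zero {T : ℝ} {f : ℝ → ℝ} (hfa : AbsContOn 0 T f)
    (hd : ∀ᵐ t : ℝ, t ∈ Set.Icc 0 T → HasDerivAt f 0 t) :
    ∀ t1 ∈ Set.Icc (0:ℝ) T, ∀ t2 ∈ Set.Icc (0:ℝ) T, f t1 = f t2 := by
  have hc : ContinuousOn f (Set.Icc 0 T) := hfa.continuousOn
  have luzin : ∀ {A : Set ℝ}, A ⊆ Set.Icc 0 T → volume A = 0 → volume (f '' A) = 0 :=
    fun hA h0 => hfa.luzinN hA h0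
  set N := {t : ℝ | ¬(t ∈ Set.Icc (0:ℝ) T → HasDerivAt f 0 t)} with hNdef
  have hN0 : volume N = 0 := hd
  set s := Set.Icc (0:ℝ) T \ N with hsdef
  have hder : ∀ x ∈ s, HasFDerivWithinAt f (0 : ℝ →L[ℝ] ℝ) s x := by
    intro x hx
    have hx2 : HasDerivAt f 0 x := by
      by_contra hcon
      exact hx.2 (fun h => absurd (h hx.1) hcon)
    have h1 : HasFDerivAt f (ContinuousLinearMap.smulRight (1 : ℝ →L[ℝ] ℝ) (0:ℝ)) x :=
      hasDerivAt_iff_hasFDerivAt.1 hx2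
    have h2 : (ContinuousLinearMap.smulRight (1 : ℝ →L[ℝ] ℝ) (0:ℝ)) = 0 := by
      ext; simp
    rw [h2] at h1
    exact h1.hasFDerivWithinAt
  have hdet : ∀ x ∈ s, (0 : ℝ →L[ℝ] ℝ).det = 0 := by
    intro x _
    simp [ContinuousLinearMap.det]
  have him : volume (f '' s) = 0 :=
    addHaar_image_eq_zero_of_det_fderivWithin_eq_zero volume hder hdet
  have himN : volume (f '' (Set.Icc 0 T ∩ N)) = 0 :=
    luzin inter_subset_left (measure_mono_null inter_subset_right hN0)
  have key : ∀ t1 ∈ Set.Icc (0:ℝ) T, ∀ t2 ∈ Set.Icc (0:ℝ) T, t1 ≤ t2 → f t1 = f t2 := by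
    intro t1 h1 t2 h2 h12
    by_contra hne
    have hsub : f '' Set.Icc t1 t2 ⊆ f '' s ∪ f '' (Set.Icc 0 T ∩ N) := by
      rintro _ ⟨x, hx, rfl⟩
      have hx' : x ∈ Set.Icc (0:ℝ) T := ⟨h1.1.trans hx.1, hx.2.trans h2.2⟩
      by_cases hxN : x ∈ N
      · exact Or.inr ⟨x, ⟨hx', hxN⟩, rfl⟩
      · exact Or.inl ⟨x, ⟨hx', hxN⟩, rfl⟩
    have h0 : volume (f '' Set.Icc t1 t2) = 0 :=
      measure_mono_null hsub (measure_union_null him himN)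
    have hcont : ContinuousOn f (Set.Icc t1 t2) := hc.mono (Set.Icc_subset_Icc h1.1 h2.2)
    rcases le_total (f t1) (f t2) with hle | hle
    · have hIVT := intermediate_value_Icc h12 hcont
      have : volume (Set.Icc (f t1) (f t2)) = 0 := measure_mono_null hIVT h0
      rw [Real.volume_Icc] at this
      have hlt : f t1 < f t2 := lt_of_le_of_ne hle hne
      exact absurd this (by simp [ENNReal.ofReal_eq_zero]; linarith)
    · have hIVT := intermediate_value_Icc' h12 hcont
      have : volume (Set.Icc (f t2) (f t1)) = 0 := measure_mono_null hIVT h0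
      rw [Real.volume_Icc] at this
      have hlt : f t2 < f t1 := lt_of_le_of_ne hle (Ne.symm hne)
      exact absurd this (by simp [ENNReal.ofReal_eq_zero]; linarith)
  intro t1 h1 t2 h2
  rcases le_total t1 t2 with h | h
  · exact key t1 h1 t2 h2 h
  · exact (key t2 h2 t1 h1 h).symm

theorem stmt_17 (n : ℕ) (T : ℝ) (hT : 0 < T) (X : Fin n → ℝ → ℝ)
    (hX : ∀ i, ContDiff ℝ (⊤ : ℕ∞) (X i))
    (hhom : ∀ i, ∀ l > (0 : ℝ), ∀ x : ℝ, X i (l * x) = l * X i x)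
    (x1 x2 : ℝ → ℝ) (u : ℝ → Fin n → ℝ) (p0 : ℝ) (p1 p2 : ℝ → ℝ)
    (hext : IsExtremal15 n T X x1 x2 u p0 p1 p2) :
    ∀ t1 ∈ Set.Icc (0 : ℝ) T, ∀ t2 ∈ Set.Icc (0 : ℝ) T,
      p1 t1 * x1 t1 + p2 t1 * x2 t1 = p1 t2 * x1 t2 + p2 t2 * x2 t2 := by
  obtain ⟨hx1, hx2, hp1, hp2, hu, hubd, hp0, hnt, hae⟩ := hext
  have hgAC : AbsContOn 0 T (fun t => p1 t * x1 t + p2 t * x2 t) :=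
    (hp1.mul hx1).add (hp2.mul hx2)
  have hg : ∀ᵐ t : ℝ, t ∈ Set.Icc (0:ℝ) T →
      HasDerivAt (fun t => p1 t * x1 t + p2 t * x2 t) 0 t := by
    filter_upwards [hae] with t ht htmem
    obtain ⟨hx1d, hx2d, hp1d, hp2d, -⟩ := ht htmem
    have h1 : HasDerivAt (fun t => p1 t * x1 t)
        (-(p2 t * ∑ i, deriv (X i) (x1 t) * u t i) * x1 t + p1 t * x2 t) t := hp1d.mul hx1d
    have h2 : HasDerivAt (fun t => p2 t * x2 t)
        (-(p1 t) * x2 t + p2 t * (∑ i, X i (x1 t) * u t i)) t := hp2d.mul hx2d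
    have h3 := h1.add h2
    have hE : (∑ i, deriv (X i) (x1 t) * u t i) * x1 t = ∑ i, X i (x1 t) * u t i := by
      rw [Finset.sum_mul]
      refine Finset.sum_congr rfl fun i _ => ?_
      rw [mul_right_comm, euler_rel (hX i) (hhom i) (x1 t)]
    have heq : (-(p2 t * ∑ i, deriv (X i) (x1 t) * u t i) * x1 t + p1 t * x2 t) +
        (-(p1 t) * x2 t + p2 t * (∑ i, X i (x1 t) * u t i)) = 0 := by
      have h4 : p2 t * ((∑ i, deriv (X i) (x1 t) * u t i) * x1 t)
          = p2 t * (∑ i, X i (x1 t) * u t i) := by rw [hE]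
      linear_combination -h4
    rw [heq] at h3
    exact h3
  exact fun t1 h1 t2 h2 => hgAC.constant_of_ae_deriv_zero hg t1 h1 t2 h2
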